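/- arXiv:2302.11039 — 2 statements merged into one kernel-verified Lean document; each statement's English description precedes it below -/
import Mathlib

section
/- Let K be a field of characteristic 0, U a nonempty finite subset of ℤ, and V, V' ∈ C(U,2d) with 2d ≤ k. For matchings M ∈ M(V,d) and M' ∈ M(V',d), the iterated partial derivative ∂^M ∂^{M'} Φ_{U,k} equals Φ_{U∖(V∪V'), k−2d} if V ∩ V' = ∅, and equals 0 if V ∩ V' ≠ ∅. -/
open MvPolynomial Finset

noncomputable section

/-- The set of matchings with exactly `k` edges of the complete graph on vertex set `V ⊆ ℤ`:
sets of `k` pairwise disjoint 2-element subsets of `V`. -/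
def matchings (V : Finset ℤ) (k : ℕ) : Finset (Finset (Finset ℤ)) :=
  (V.powersetCard 2).powerset.filter fun M =>
    M.card = k ∧ ∀ e ∈ M, ∀ f ∈ M, e ≠ f → Disjoint e f

/-- `S` is a matching of the complete graph on vertex set `V`. -/
def IsMatching (V : Finset ℤ) (S : Finset (Finset ℤ)) : Prop :=
  S ⊆ V.powersetCard 2 ∧ ∀ e ∈ S, ∀ f ∈ S, e ≠ f → Disjoint e f

/-- The weighted generating function `Φ_{V,k} = Σ_{M ∈ M(V,k)} x^M` of `k`-edge matchings,
an element of the polynomial ring with variables indexed by (potential) edges. -/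
def Phi (K : Type*) [Field K] (V : Finset ℤ) (k : ℕ) : MvPolynomial (Finset ℤ) K :=
  ∑ M ∈ matchings V k, ∏ e ∈ M, X e

/-- The differential operator `∂^S = Π_{i ∈ S} ∂/∂x_i` applied to `p`. -/
def dset {K : Type*} [CommSemiring K] {ι : Type*} [DecidableEq ι]
    (S : Finset ι) (p : MvPolynomial ι K) : MvPolynomial ι K :=
  S.toList.foldr (fun i q => pderiv i q) p

/-- The differential operator `∂^m = Π_i (∂/∂x_i)^{m i}` of a monomial exponent `m`. -/
def dmon {K : Type*} [CommSemiring K] {ι : Type*} [DecidableEq ι]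
    (m : ι →₀ ℕ) (p : MvPolynomial ι K) : MvPolynomial ι K :=
  m.support.toList.foldr (fun i q => (⇑(pderiv (R := K) i))^[m i] q) p

/-- The linear map `f ↦ f(∂)Φ`, where `f(∂)` is obtained from `f` by substituting
`∂/∂x_i` for `x_i`. -/
def diffOp (K : Type*) [Field K] {ι : Type*} [DecidableEq ι]
    (Φ : MvPolynomial ι K) : MvPolynomial ι K →ₗ[K] MvPolynomial ι K :=
  (basisMonomials ι K).constr K fun m => dmon m Φ

/-- The annihilator `Ann(Φ) = {f : f(∂)Φ = 0}`. -/
def Ann (K : Type*) [Field K] {ι : Type*} [DecidableEq ι]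
    (Φ : MvPolynomial ι K) : Submodule K (MvPolynomial ι K) :=
  LinearMap.ker (diffOp K Φ)

/-- The canonical matching `M(V) = {{v₁,v₂},{v₃,v₄},…}` on `V = {v₁ < v₂ < ⋯}`. -/
def canonMatching (V : Finset ℤ) : Finset (Finset ℤ) :=
  (Finset.range (V.card / 2)).image fun i =>
    ({(V.sort (· ≤ ·)).getD (2 * i) 0, (V.sort (· ≤ ·)).getD (2 * i + 1) 0} : Finset ℤ)

/-- The `n`-th elementary symmetric polynomial in the variables indexed by `U`. -/
def elemSymm (K : Type*) [Field K] {ι : Type*} (U : Finset ι) (n : ℕ) : MvPolynomial ι K :=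
  ∑ S ∈ U.powersetCard n, ∏ i ∈ S, X i

end

/-!
The operator `∂^S` sends a squarefree monomial `x^N` to `x^(N ∖ S)` if `S ⊆ N` and to `0`
otherwise, so `∂^M ∂^{M'} Φ_{U,k}` is the sum of `x^(N ∖ (M ∪ M'))` over the `k`-matchings
`N ⊇ M ∪ M'` of `U`, provided `M` and `M'` share no edge. A matching with `d` edges on `2d`
vertices covers all of them. If `v ∈ V ∩ V'`, the edges of `M` and `M'` through `v` are distinct
and meet, so no matching contains both and every term vanishes. If `V ∩ V' = ∅`, then `M ∪ M'` is
a perfect matching of `V ∪ V'`, and `N ↦ N ∖ (M ∪ M')` is a bijection onto the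
`(k - 2d)`-matchings of `U ∖ (V ∪ V')`.
-/

section PartialDerivatives

variable {K : Type*} [CommSemiring K] {ι : Type*} [DecidableEq ι]

theorem pderiv_prod_X (a : ι) (N : Finset ι) :
    pderiv a (∏ e ∈ N, (X e : MvPolynomial ι K)) =
      if a ∈ N then ∏ e ∈ N.erase a, X e else 0 := by
  induction N using Finset.induction_on with
  | empty => simp
  | insert b N hb ih =>
    rw [prod_insert hb, pderiv_mul, ih]
    by_cases hab : a = b
    · subst hab
      simp [hb]
    · have hba : b ≠ a := Ne.symm hab
      rw [erase_insert_of_ne hba, prod_insert (mt mem_of_mem_erase hb)]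
      simp [pderiv_X_of_ne hba, hab, apply_ite (X b * ·)]

theorem foldr_pderiv_prod_X {l : List ι} (hl : l.Nodup) (N : Finset ι) :
    l.foldr (fun i q => pderiv i q) (∏ e ∈ N, (X e : MvPolynomial ι K)) =
      if l.toFinset ⊆ N then ∏ e ∈ N \ l.toFinset, X e else 0 := by
  induction l with
  | nil => simp
  | cons a l ih =>
    obtain ⟨hal, hl⟩ := List.nodup_cons.1 hl
    rw [List.foldr_cons, ih hl, List.toFinset_cons]
    by_cases hlN : l.toFinset ⊆ N
    · have ha : a ∈ N \ l.toFinset ↔ a ∈ N := by simp [hal]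
      rw [if_pos hlN, pderiv_prod_X, sdiff_insert]
      simp only [insert_subset_iff, hlN, and_true, ha]
    · rw [if_neg hlN, map_zero, if_neg fun h => hlN (insert_subset_iff.1 h).2]

theorem dset_prod_X (S N : Finset ι) :
    dset S (∏ e ∈ N, (X e : MvPolynomial ι K)) =
      if S ⊆ N then ∏ e ∈ N \ S, X e else 0 := by
  rw [dset, foldr_pderiv_prod_X S.nodup_toList, toList_toFinset]

theorem dset_sum {α : Type*} (S : Finset ι) (T : Finset α) (f : α → MvPolynomial ι K) :
    dset S (∑ n ∈ T, f n) = ∑ n ∈ T, dset S (f n) := by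
  unfold dset
  induction S.toList with
  | nil => rfl
  | cons a l ih => simp only [List.foldr_cons, ih, map_sum]

theorem dset_zero (S : Finset ι) : dset S (0 : MvPolynomial ι K) = 0 := by
  simpa using dset_sum S (∅ : Finset ι) fun _ => 0

theorem dset_dset_prod_X (S T N : Finset ι) :
    dset S (dset T (∏ e ∈ N, (X e : MvPolynomial ι K))) =
      if Disjoint S T ∧ S ∪ T ⊆ N then ∏ e ∈ N \ (S ∪ T), X e else 0 := by
  rw [dset_prod_X]
  by_cases hT : T ⊆ N
  · rw [if_pos hT, dset_prod_X, sdiff_sdiff_left, sup_comm]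
    exact if_congr (by rw [subset_sdiff, union_subset_iff]; tauto) rfl rfl
  · rw [if_neg hT, dset_zero, if_neg fun h => hT (subset_union_right.trans h.2)]

end PartialDerivatives

section Matchings

variable {U V V' A : Finset ℤ} {M M' N W : Finset (Finset ℤ)} {j k a b : ℕ}

theorem mem_matchings :
    M ∈ matchings V k ↔
      M ⊆ V.powersetCard 2 ∧ M.card = k ∧ ∀ e ∈ M, ∀ f ∈ M, e ≠ f → Disjoint e f := by
  simp [matchings]

theorem matchings_mono (h : V ⊆ U) : matchings V k ⊆ matchings U k := fun _ hM => by
  obtain ⟨hsub, hcard, hdisj⟩ := mem_matchings.1 hM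
  exact mem_matchings.2 ⟨hsub.trans (powersetCard_mono h), hcard, hdisj⟩

theorem disjoint_of_mem_matchings (hM : M ∈ matchings V a) (hM' : M' ∈ matchings V' b)
    (h : Disjoint V V') : Disjoint M M' := by
  refine disjoint_left.2 fun e he he' => ?_
  obtain ⟨heV, hcard⟩ := mem_powersetCard.1 ((mem_matchings.1 hM).1 he)
  obtain ⟨x, hx⟩ := card_pos.1 (by omega : 0 < e.card)
  exact disjoint_left.1 h (heV hx) (mem_powersetCard.1 ((mem_matchings.1 hM').1 he') |>.1 hx)

theorem union_mem_matchings (hM : M ∈ matchings V a) (hM' : M' ∈ matchings V' b)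
    (h : Disjoint V V') : M ∪ M' ∈ matchings (V ∪ V') (a + b) := by
  obtain ⟨hMV, hMcard, hMdisj⟩ := mem_matchings.1 hM
  obtain ⟨hM'V', hM'card, hM'disj⟩ := mem_matchings.1 hM'
  have cross : ∀ e ∈ M, ∀ f ∈ M', Disjoint e f := fun e he f hf =>
    h.mono (mem_powersetCard.1 (hMV he)).1 (mem_powersetCard.1 (hM'V' hf)).1
  refine mem_matchings.2 ⟨union_subset ?_ ?_, ?_, ?_⟩
  · exact hMV.trans (powersetCard_mono subset_union_left)
  · exact hM'V'.trans (powersetCard_mono subset_union_right)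
  · rw [card_union_of_disjoint (disjoint_of_mem_matchings hM hM' h), hMcard, hM'card]
  · intro e he f hf hef
    rcases mem_union.1 he with he | he <;> rcases mem_union.1 hf with hf | hf
    exacts [hMdisj e he f hf hef, cross e he f hf, (cross f hf e he).symm,
      hM'disj e he f hf hef]

theorem exists_mem_of_mem_matchings (hM : M ∈ matchings V k) (hV : V.card = 2 * k)
    {v : ℤ} (hv : v ∈ V) : ∃ e ∈ M, v ∈ e := by
  obtain ⟨hsub, hcard, hdisj⟩ := mem_matchings.1 hM
  have hcover : (M.biUnion fun e => e) ⊆ V :=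
    biUnion_subset.2 fun e he => (mem_powersetCard.1 (hsub he)).1
  have hcard_cover : (M.biUnion fun e => e).card = 2 * k := by
    rw [card_biUnion hdisj, sum_congr rfl fun e he => (mem_powersetCard.1 (hsub he)).2,
      sum_const, hcard, smul_eq_mul, mul_comm]
  rw [← eq_of_subset_of_card_le hcover (by rw [hcard_cover, hV])] at hv
  simpa using hv

theorem not_disjoint_and_union_subset_of_mem_inter (hM : M ∈ matchings V a)
    (hV : V.card = 2 * a) (hM' : M' ∈ matchings V' b) (hV' : V'.card = 2 * b)
    (hN : N ∈ matchings U k) {v : ℤ} (hv : v ∈ V ∩ V') : ¬(Disjoint M M' ∧ M ∪ M' ⊆ N) := by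
  rintro ⟨hMM', hMM'N⟩
  obtain ⟨e, he, hve⟩ := exists_mem_of_mem_matchings hM hV (mem_inter.1 hv).1
  obtain ⟨f, hf, hvf⟩ := exists_mem_of_mem_matchings hM' hV' (mem_inter.1 hv).2
  have hef : e ≠ f := fun h => disjoint_left.1 hMM' he (h ▸ hf)
  have hdisj := (mem_matchings.1 hN).2.2 e (hMM'N (mem_union_left _ he)) f
    (hMM'N (mem_union_right _ hf)) hef
  exact disjoint_left.1 hdisj hve hvf

theorem sdiff_mem_matchings (hN : N ∈ matchings U k) (hW : W ∈ matchings A j)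
    (hA : A.card = 2 * j) (hWN : W ⊆ N) : N \ W ∈ matchings (U \ A) (k - j) := by
  obtain ⟨hNU, hNcard, hNdisj⟩ := mem_matchings.1 hN
  refine mem_matchings.2 ⟨fun e he => ?_, ?_, fun e he f hf => hNdisj e (sdiff_subset he) f
    (sdiff_subset hf)⟩
  · obtain ⟨heN, heW⟩ := mem_sdiff.1 he
    obtain ⟨heU, hcard⟩ := mem_powersetCard.1 (hNU heN)
    refine mem_powersetCard.2 ⟨fun x hx => mem_sdiff.2 ⟨heU hx, fun hxA => ?_⟩, hcard⟩
    obtain ⟨f, hfW, hxf⟩ := exists_mem_of_mem_matchings hW hA hxA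
    have hef : e ≠ f := fun h => heW (h ▸ hfW)
    exact disjoint_left.1 (hNdisj e heN f (hWN hfW) hef) hx hxf
  · rw [card_sdiff_of_subset hWN, hNcard, (mem_matchings.1 hW).2.1]

theorem sum_matchings_filter_superset {β : Type*} [AddCommMonoid β] (hAU : A ⊆ U)
    (hW : W ∈ matchings A j) (hA : A.card = 2 * j) (hjk : j ≤ k) (g : Finset (Finset ℤ) → β) :
    ∑ N ∈ (matchings U k).filter (W ⊆ ·), g (N \ W) = ∑ N ∈ matchings (U \ A) (k - j), g N := by
  refine sum_nbij' (· \ W) (· ∪ W) (fun N hN => ?_) (fun N hN => ?_) (fun N hN => ?_)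
    (fun N hN => ?_) fun _ _ => rfl
  · obtain ⟨hN, hWN⟩ := mem_filter.1 hN
    exact sdiff_mem_matchings hN hW hA hWN
  · have hNW := union_mem_matchings (mem_coe.1 hN) hW sdiff_disjoint
    rw [sdiff_union_of_subset hAU, Nat.sub_add_cancel hjk] at hNW
    exact mem_filter.2 ⟨hNW, subset_union_right⟩
  · exact sdiff_union_of_subset (mem_filter.1 hN).2
  · exact union_sdiff_cancel_right (disjoint_of_mem_matchings (mem_coe.1 hN) hW sdiff_disjoint)

end Matchings

theorem dset_dset_Phi_general {K : Type*} [Field K]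
    (U V V' : Finset ℤ) (d k : ℕ) (hdk : 2 * d ≤ k)
    (hV : V ∈ U.powersetCard (2 * d)) (hV' : V' ∈ U.powersetCard (2 * d))
    (M M' : Finset (Finset ℤ)) (hM : M ∈ matchings V d) (hM' : M' ∈ matchings V' d) :
    (V ∩ V' = ∅ → dset M (dset M' (Phi K U k)) = Phi K (U \ (V ∪ V')) (k - 2 * d)) ∧
    (V ∩ V' ≠ ∅ → dset M (dset M' (Phi K U k)) = 0) := by
  obtain ⟨hVU, hVcard⟩ := mem_powersetCard.1 hV
  obtain ⟨hV'U, hV'card⟩ := mem_powersetCard.1 hV'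
  have hexpand : dset M (dset M' (Phi K U k)) = ∑ N ∈ matchings U k,
      if Disjoint M M' ∧ M ∪ M' ⊆ N then ∏ e ∈ N \ (M ∪ M'), X e else 0 := by
    simp only [Phi, dset_sum, dset_dset_prod_X]
  refine ⟨fun hVV' => ?_, fun hVV' => ?_⟩
  · have hdisj : Disjoint V V' := disjoint_iff_inter_eq_empty.2 hVV'
    have hcard : (V ∪ V').card = 2 * (d + d) := by
      rw [card_union_of_disjoint hdisj, hVcard, hV'card, mul_add]
    rw [hexpand]
    simp only [disjoint_of_mem_matchings hM hM' hdisj, true_and]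
    rw [← sum_filter, Phi, two_mul d]
    exact sum_matchings_filter_superset (union_subset hVU hV'U)
      (union_mem_matchings hM hM' hdisj) hcard (by omega) fun N => ∏ e ∈ N, X e
  · obtain ⟨v, hv⟩ := nonempty_iff_ne_empty.2 hVV'
    rw [hexpand]
    exact sum_eq_zero fun N hN => if_neg <|
      not_disjoint_and_union_subset_of_mem_inter hM hVcard hM' hV'card hN hv

/-- for `V, V' ∈ C(U,2d)` with `2d ≤ k`, matchings `M ∈ M(V,d)`,
`M' ∈ M(V',d)`: `∂^M ∂^{M'} Φ_{U,k} = Φ_{U∖(V∪V'), k−2d}` if `V ∩ V' = ∅`, and `= 0`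
otherwise. -/
theorem dset_dset_Phi {K : Type*} [Field K] [CharZero K]
    (U V V' : Finset ℤ) (hU : U.Nonempty) (d k : ℕ) (hdk : 2 * d ≤ k)
    (hV : V ∈ U.powersetCard (2 * d)) (hV' : V' ∈ U.powersetCard (2 * d))
    (M M' : Finset (Finset ℤ)) (hM : M ∈ matchings V d) (hM' : M' ∈ matchings V' d) :
    (V ∩ V' = ∅ → dset M (dset M' (Phi K U k)) = Phi K (U \ (V ∪ V')) (k - 2 * d)) ∧
    (V ∩ V' ≠ ∅ → dset M (dset M' (Phi K U k)) = 0) :=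
  dset_dset_Phi_general U V V' d k hdk hV hV' M M' hM hM'
end

section
/- Let K be a field of characteristic 0 and U a nonempty finite subset of ℤ with 2k ≤ |U|. For every d with 2d ≤ k and every homogeneous polynomial f ∈ P_U of degree d, if (Σ_{e ∈ C(U,2)} x_e)^{k-2d} · f lies in Ann(Φ_{U,k}), then f lies in Ann(Φ_{U,k}); i.e., multiplication by l^{k-2d} with l = Σ_{e ∈ C(U,2)} x_e is injective from the degree-d component of A_{U,k} = P_U/Ann(Φ_{U,k}) to the degree-(k−d) component. -/
open MvPolynomial Finset

/-
Since partial derivatives commute, `f ↦ f(∂)` is an algebra homomorphism, so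
`(l^(k-2d) f)(∂) Φ_k = f(∂) (l(∂)^(k-2d) Φ_k)`; and `l(∂) Φ_(m+1) = C(|U| - 2m, 2) Φ_m`, hence
the hypothesis says `f(∂) Φ_(2d) = 0`.

Splitting each `j`-matching `M` as `S ∪ N`, the coefficient of `x^N` in `f(∂) Φ_j` is
`F(V(N))`, where `F(W)` is the sum of the coefficients of `x^S` in `f` over the
`(j - |N|)`-matchings `S` whose vertex set avoids `W`. By homogeneity only `|S| = d` matters, so
the hypothesis says that `F` vanishes on all `2d`-sets and the claim is that `F` vanishes on every
`W ⊆ U`. Averaging over the `2d`-supersets of `W` (possible as `4d ≤ |U|`) gives `F(W) = 0` for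
`|W| ≤ 2d`. By Möbius inversion on the Boolean lattice, the sums over the `S` whose vertex set
contains `A` then vanish for `|A| ≤ 2d`, and trivially for `|A| > 2d`; inverting back, `F`
vanishes everywhere.
-/

namespace MvPolynomial

theorem pderiv_pderiv_comm {R σ : Type*} [CommSemiring R] (i j : σ) (p : MvPolynomial σ R) :
    pderiv i (pderiv j p) = pderiv j (pderiv i p) := by
  classical
  induction p using MvPolynomial.induction_on with
  | C a => simp
  | add p q hp hq => simp only [map_add, hp, hq]
  | mul_X p n ih =>
    simp only [pderiv_mul, map_add, pderiv_X, ih, Pi.single_apply]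
    split_ifs <;> simp only [pderiv_one, map_zero, mul_zero, add_zero, mul_one, add_right_comm]

section sqfreeExp

variable {R σ : Type*} [CommSemiring R]

noncomputable def sqfreeExp (S : Finset σ) : σ →₀ ℕ := ∑ i ∈ S, Finsupp.single i 1

@[simp]
theorem sqfreeExp_empty : sqfreeExp (∅ : Finset σ) = 0 := sum_empty

theorem sqfreeExp_insert [DecidableEq σ] {S : Finset σ} {i : σ} (hi : i ∉ S) :
    sqfreeExp (insert i S) = sqfreeExp S + Finsupp.single i 1 := by
  rw [sqfreeExp, sum_insert hi, add_comm, sqfreeExp]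

theorem sqfreeExp_apply [DecidableEq σ] (S : Finset σ) (i : σ) :
    sqfreeExp S i = if i ∈ S then 1 else 0 := by
  simp [sqfreeExp, Finsupp.finsetSum_apply, Finsupp.single_apply]

theorem support_sqfreeExp (S : Finset σ) : (sqfreeExp S).support = S := by
  classical
  ext i
  simp [sqfreeExp_apply]

theorem sqfreeExp_injective : Function.Injective (sqfreeExp (σ := σ)) := fun S T h => by
  rw [← support_sqfreeExp S, h, support_sqfreeExp]

theorem degree_sqfreeExp (S : Finset σ) : (sqfreeExp S).degree = #S := by
  simp [sqfreeExp, map_sum, Finsupp.degree_single]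

theorem prod_X_eq_monomial_sqfreeExp (S : Finset σ) :
    ∏ i ∈ S, (X i : MvPolynomial σ R) = monomial (sqfreeExp S) 1 := by
  rw [sqfreeExp, monomial_sum_one]
  rfl

theorem coeff_sqfreeExp_prod_X [DecidableEq σ] (S T : Finset σ) :
    coeff (sqfreeExp T) (∏ i ∈ S, (X i : MvPolynomial σ R)) = if S = T then 1 else 0 := by
  simp only [prod_X_eq_monomial_sqfreeExp, coeff_monomial, sqfreeExp_injective.eq_iff]

theorem pderiv_prod_X [DecidableEq σ] (i : σ) (S : Finset σ) :
    pderiv i (∏ j ∈ S, (X j : MvPolynomial σ R)) =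
      if i ∈ S then ∏ j ∈ S.erase i, X j else 0 := by
  rw [prod_X_eq_monomial_sqfreeExp, pderiv_monomial, one_mul, sqfreeExp_apply]
  split_ifs with hi
  · rw [← insert_erase hi, sqfreeExp_insert (notMem_erase i S), add_tsub_cancel_right,
      erase_insert (notMem_erase i S), Nat.cast_one, prod_X_eq_monomial_sqfreeExp]
  · rw [Nat.cast_zero, monomial_zero]

theorem coeff_sqfreeExp_mul_X_of_notMem [DecidableEq σ] (p : MvPolynomial σ R) {T : Finset σ}
    {i : σ} (hi : i ∉ T) : coeff (sqfreeExp T) (p * X i) = 0 := by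
  rw [coeff_mul_X', support_sqfreeExp, if_neg hi]

theorem coeff_sqfreeExp_insert_mul_X [DecidableEq σ] (p : MvPolynomial σ R) {T : Finset σ}
    {i : σ} (hi : i ∉ T) : coeff (sqfreeExp (insert i T)) (p * X i) = coeff (sqfreeExp T) p := by
  rw [sqfreeExp_insert hi, coeff_mul_X]

end sqfreeExp

section diffOpHom

open scoped IsMulCommutative

variable (K : Type*) [Field K] (ι : Type*) [DecidableEq ι]

/- The partial derivatives commute, so `f ↦ f(∂)` can be built as `aeval` into the commutative
algebra they generate. -/
noncomputable def pderivAlgebra : Subalgebra K (Module.End K (MvPolynomial ι K)) :=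
  Algebra.adjoin K (Set.range fun i => (pderiv (R := K) i).toLinearMap)

instance : IsMulCommutative (pderivAlgebra K ι) :=
  Algebra.isMulCommutative_adjoin K <| by
    rintro _ ⟨i, rfl⟩ _ ⟨j, rfl⟩
    exact LinearMap.ext fun p => pderiv_pderiv_comm i j p

noncomputable def diffOpHom : MvPolynomial ι K →ₐ[K] pderivAlgebra K ι :=
  aeval fun i => ⟨(pderiv i).toLinearMap, Algebra.subset_adjoin ⟨i, rfl⟩⟩

variable {K ι}

theorem dmon_eq_diffOpHom_monomial (m : ι →₀ ℕ) (Φ : MvPolynomial ι K) :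
    dmon m Φ = (diffOpHom K ι (monomial m 1) : Module.End K _) Φ := by
  rw [diffOpHom, aeval_monomial, map_one, one_mul, Finsupp.prod, ← Finset.prod_map_toList,
    SubmonoidClass.coe_list_prod, List.map_map, dmon]
  induction m.support.toList with
  | nil => rfl
  | cons i l ih => simp [ih, Module.End.pow_apply]

theorem diffOp_apply_eq_diffOpHom (Φ f : MvPolynomial ι K) :
    diffOp K Φ f = (diffOpHom K ι f : Module.End K _) Φ := by
  induction f using MvPolynomial.induction_on' with
  | monomial m a =>
    have hm : monomial m (1 : K) = basisMonomials ι K m := rfl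
    rw [← mul_one a, ← smul_eq_mul, ← smul_monomial, map_smul, map_smul, diffOp, hm,
      Module.Basis.constr_basis, dmon_eq_diffOpHom_monomial, ← hm]
    rfl
  | add p q hp hq => simp only [map_add, hp, hq, Subalgebra.coe_add, LinearMap.add_apply]

theorem diffOp_mul (Φ f g : MvPolynomial ι K) :
    diffOp K Φ (f * g) = diffOp K (diffOp K Φ g) f := by
  simp only [diffOp_apply_eq_diffOpHom, map_mul, Subalgebra.coe_mul, Module.End.mul_apply]

theorem diffOp_X (Φ : MvPolynomial ι K) (i : ι) : diffOp K Φ (X i) = pderiv i Φ := by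
  rw [diffOp_apply_eq_diffOpHom, diffOpHom, aeval_X]
  rfl

theorem diffOp_C (Φ : MvPolynomial ι K) (a : K) : diffOp K Φ (C a) = a • Φ := by
  rw [diffOp_apply_eq_diffOpHom, ← algebraMap_eq, AlgHom.commutes]
  rfl

theorem diffOp_smul_left (a : K) (Φ f : MvPolynomial ι K) :
    diffOp K (a • Φ) f = a • diffOp K Φ f := by
  simp only [diffOp_apply_eq_diffOpHom, map_smul]

theorem diffOp_sum_left {α : Type*} (s : Finset α) (Φ : α → MvPolynomial ι K)
    (f : MvPolynomial ι K) : diffOp K (∑ a ∈ s, Φ a) f = ∑ a ∈ s, diffOp K (Φ a) f := by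
  simp only [diffOp_apply_eq_diffOpHom, map_sum]

theorem diffOp_prod_X (S : Finset ι) (f : MvPolynomial ι K) :
    diffOp K (∏ i ∈ S, X i) f = ∑ T ∈ S.powerset, coeff (sqfreeExp T) f • ∏ i ∈ S \ T, X i := by
  induction f using MvPolynomial.induction_on generalizing S with
  | C a =>
    rw [diffOp_C, sum_eq_single_of_mem ∅ (empty_mem_powerset S), sqfreeExp_empty, coeff_zero_C,
      sdiff_empty]
    intro T _ hT
    rw [coeff_C, if_neg, zero_smul]
    exact fun h => hT (sqfreeExp_injective (h.symm.trans sqfreeExp_empty.symm))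
  | add p q hp hq => simp only [map_add, hp, hq, coeff_add, add_smul, sum_add_distrib]
  | mul_X p i ih =>
    rw [diffOp_mul, diffOp_X, pderiv_prod_X]
    split_ifs with hi
    · have hS : i ∉ S.erase i := notMem_erase i S
      have hT : ∀ T ∈ (S.erase i).powerset, i ∉ T := fun T hT h => hS (mem_powerset.1 hT h)
      have hzero : ∑ T ∈ (S.erase i).powerset, coeff (sqfreeExp T) (p * X i) •
          ∏ j ∈ insert i (S.erase i) \ T, (X j : MvPolynomial ι K) = 0 :=
        sum_eq_zero fun T hTS => by rw [coeff_sqfreeExp_mul_X_of_notMem p (hT T hTS), zero_smul]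
      conv_rhs => rw [← insert_erase hi, sum_powerset_insert hS, hzero, zero_add]
      refine (ih _).trans (sum_congr rfl fun T hTS => ?_)
      rw [coeff_sqfreeExp_insert_mul_X p (hT T hTS), insert_sdiff_insert,
        sdiff_insert_of_notMem hS]
    · rw [diffOp_apply_eq_diffOpHom, map_zero]
      refine (sum_eq_zero fun T hT => ?_).symm
      rw [coeff_sqfreeExp_mul_X_of_notMem p fun h => hi (mem_powerset.1 hT h), zero_smul]

end diffOpHom

end MvPolynomial

section AvoidSum

variable {α ι M : Type*} [AddCommGroup M]

theorem sum_powerset_zsmul_sum_filter (A : Finset ι) (s : Finset α) (P : α → Finset ι → Prop)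
    [∀ a B, Decidable (P a B)] (g : α → M) :
    ∑ B ∈ A.powerset, (-1 : ℤ) ^ #B • ∑ a ∈ s with P a B, g a =
      ∑ a ∈ s, (∑ B ∈ A.powerset with P a B, (-1 : ℤ) ^ #B) • g a := by
  simp only [smul_sum, sum_filter, sum_smul, ite_smul, zero_smul, smul_ite, smul_zero]
  exact sum_comm

variable [DecidableEq ι]

def avoidSum (s : Finset α) (X : α → Finset ι) (g : α → M) (W : Finset ι) : M :=
  ∑ a ∈ s with Disjoint (X a) W, g a

def coverSum (s : Finset α) (X : α → Finset ι) (g : α → M) (A : Finset ι) : M :=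
  ∑ a ∈ s with A ⊆ X a, g a

theorem sum_powerset_filter_disjoint_neg_one_pow (A Y : Finset ι) :
    ∑ B ∈ A.powerset with Disjoint Y B, (-1 : ℤ) ^ #B = if A ⊆ Y then 1 else 0 := by
  have : {B ∈ A.powerset | Disjoint Y B} = (A \ Y).powerset := by
    ext B
    simp [subset_sdiff, disjoint_comm]
  rw [this, sum_powerset_neg_one_pow_card]
  exact if_congr sdiff_eq_empty_iff_subset rfl rfl

theorem sum_powerset_filter_subset_neg_one_pow (W Y : Finset ι) :
    ∑ B ∈ W.powerset with B ⊆ Y, (-1 : ℤ) ^ #B = if Disjoint Y W then 1 else 0 := by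
  have : {B ∈ W.powerset | B ⊆ Y} = (W ∩ Y).powerset := by
    ext B
    simp only [mem_filter, mem_powerset, subset_inter_iff]
  rw [this, sum_powerset_neg_one_pow_card]
  exact if_congr (disjoint_iff_inter_eq_empty.symm.trans disjoint_comm) rfl rfl

variable (s : Finset α) (X : α → Finset ι) (g : α → M)

theorem coverSum_eq_sum_powerset (A : Finset ι) :
    coverSum s X g A = ∑ B ∈ A.powerset, (-1 : ℤ) ^ #B • avoidSum s X g B := by
  unfold avoidSum coverSum
  rw [sum_powerset_zsmul_sum_filter, sum_filter]
  simp only [sum_powerset_filter_disjoint_neg_one_pow, ite_smul, one_smul, zero_smul]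

theorem avoidSum_eq_sum_powerset (W : Finset ι) :
    avoidSum s X g W = ∑ B ∈ W.powerset, (-1 : ℤ) ^ #B • coverSum s X g B := by
  unfold avoidSum coverSum
  rw [sum_powerset_zsmul_sum_filter, sum_filter]
  simp only [sum_powerset_filter_subset_neg_one_pow, ite_smul, one_smul, zero_smul]

variable {s X} {V : Finset ι} {m : ℕ}

theorem sum_avoidSum_superset (hX : ∀ a ∈ s, X a ⊆ V ∧ #(X a) = m) {W : Finset ι} (hWV : W ⊆ V)
    {n : ℕ} (hWn : #W ≤ n) :
    ∑ W' ∈ V.powersetCard n with W ⊆ W', avoidSum s X g W' =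
      (#V - m - #W).choose (n - #W) • avoidSum s X g W := by
  have hcard : ∀ a ∈ s, #{W' ∈ V.powersetCard n | W ⊆ W' ∧ Disjoint (X a) W'} =
      if Disjoint (X a) W then (#V - m - #W).choose (n - #W) else 0 := by
    intro a ha
    split_ifs with hdisj
    · have hsub : W ⊆ V \ X a := subset_sdiff.2 ⟨hWV, hdisj.symm⟩
      rw [← (hX a ha).2, ← card_sdiff_of_subset (hX a ha).1,
        ← card_filter_powersetCard_subset W (V \ X a) n hsub hWn]
      congr 1
      ext W'
      simp only [mem_filter, mem_powersetCard, subset_sdiff]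
      tauto
    · rw [card_eq_zero, filter_eq_empty_iff]
      exact fun W' _ h => hdisj (h.2.mono_right h.1)
  unfold avoidSum
  rw [sum_comm' (t' := s) (s' := fun a => {W' ∈ V.powersetCard n | W ⊆ W' ∧ Disjoint (X a) W'})]
  · rw [smul_sum, sum_filter]
    refine sum_congr rfl fun a ha => ?_
    rw [sum_const, hcard a ha]
    split_ifs <;> simp
  · intro W' a
    simp only [mem_filter]
    tauto

theorem avoidSum_eq_zero_of_forall_card_eq [IsAddTorsionFree M] (hX : ∀ a ∈ s, X a ⊆ V ∧ #(X a) = m)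
    {n : ℕ} (hmn : m ≤ n) (hV : m + n ≤ #V)
    (h : ∀ W ⊆ V, #W = n → avoidSum s X g W = 0) {W : Finset ι} (hW : W ⊆ V) :
    avoidSum s X g W = 0 := by
  have hsmall : ∀ W ⊆ V, #W ≤ n → avoidSum s X g W = 0 := by
    intro W hWV hWn
    have hpos : (#V - m - #W).choose (n - #W) ≠ 0 := (Nat.choose_pos (by omega)).ne'
    apply nsmul_right_injective hpos
    dsimp only
    rw [← sum_avoidSum_superset g hX hWV hWn, smul_zero]
    refine sum_eq_zero fun W' hW' => ?_
    rw [mem_filter, mem_powersetCard] at hW'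
    exact h W' hW'.1.1 hW'.1.2
  have hcover : ∀ A ⊆ V, coverSum s X g A = 0 := by
    intro A hAV
    by_cases hAn : #A ≤ n
    · rw [coverSum_eq_sum_powerset]
      refine sum_eq_zero fun B hB => ?_
      have hBA := mem_powerset.1 hB
      rw [hsmall B (hBA.trans hAV) ((card_le_card hBA).trans hAn), smul_zero]
    · rw [coverSum, filter_false_of_mem, sum_empty]
      exact fun a ha hA => hAn ((card_le_card hA).trans ((hX a ha).2.le.trans hmn))
  rw [avoidSum_eq_sum_powerset]
  refine sum_eq_zero fun B hB => ?_
  rw [hcover B ((mem_powerset.1 hB).trans hW), smul_zero]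

end AvoidSum

section Matchings

def verts (M : Finset (Finset ℤ)) : Finset ℤ := M.biUnion id

theorem mem_verts {M : Finset (Finset ℤ)} {a : ℤ} : a ∈ verts M ↔ ∃ e ∈ M, a ∈ e := by
  simp [verts]

theorem verts_union (S N : Finset (Finset ℤ)) : verts (S ∪ N) = verts S ∪ verts N :=
  union_biUnion ..

theorem verts_singleton (e : Finset ℤ) : verts {e} = e := singleton_biUnion

theorem disjoint_verts_iff {S N : Finset (Finset ℤ)} :
    Disjoint (verts S) (verts N) ↔ ∀ e ∈ S, ∀ f ∈ N, Disjoint e f := by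
  simp only [verts, disjoint_biUnion_left, disjoint_biUnion_right, id]
  exact ⟨fun h e he f hf => h f hf e he, fun h f hf e he => h e he f hf⟩

theorem mem_matchings_s13 {V : Finset ℤ} {k : ℕ} {M : Finset (Finset ℤ)} :
    M ∈ matchings V k ↔ IsMatching V M ∧ #M = k := by
  simp only [matchings, IsMatching, mem_filter, mem_powerset]
  tauto

namespace IsMatching

variable {V : Finset ℤ} {M S N : Finset (Finset ℤ)}

theorem mono (hM : IsMatching V M) (hS : S ⊆ M) : IsMatching V S :=
  ⟨hS.trans hM.1, fun e he f hf => hM.2 e (hS he) f (hS hf)⟩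

theorem verts_subset (hM : IsMatching V M) : verts M ⊆ V := fun a ha => by
  obtain ⟨e, he, hae⟩ := mem_verts.1 ha
  exact (mem_powersetCard.1 (hM.1 he)).1 hae

theorem card_verts (hM : IsMatching V M) : #(verts M) = 2 * #M := by
  rw [verts, card_biUnion (t := id) fun e he f hf hef => hM.2 e he f hf hef, mul_comm,
    card_eq_sum_ones, sum_mul]
  exact sum_congr rfl fun e he => by simpa using (mem_powersetCard.1 (hM.1 he)).2

theorem disjoint_of_disjoint_verts (hS : IsMatching V S) (hdisj : Disjoint (verts S) (verts N)) :
    Disjoint S N := by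
  refine disjoint_left.2 fun e heS heN => ?_
  obtain ⟨a, ha⟩ : e.Nonempty := card_pos.1 (by rw [(mem_powersetCard.1 (hS.1 heS)).2]; omega)
  exact disjoint_left.1 (disjoint_verts_iff.1 hdisj e heS e heN) ha ha

theorem union (hS : IsMatching V S) (hN : IsMatching V N) (hdisj : Disjoint (verts S) (verts N)) :
    IsMatching V (S ∪ N) := by
  refine ⟨union_subset hS.1 hN.1, fun e he f hf hef => ?_⟩
  rcases mem_union.1 he with he | he <;> rcases mem_union.1 hf with hf | hf
  · exact hS.2 e he f hf hef
  · exact disjoint_verts_iff.1 hdisj e he f hf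
  · exact (disjoint_verts_iff.1 hdisj f hf e he).symm
  · exact hN.2 e he f hf hef

theorem disjoint_verts_sdiff (hM : IsMatching V M) (hS : S ⊆ M) :
    Disjoint (verts S) (verts (M \ S)) :=
  disjoint_verts_iff.2 fun e he f hf => hM.2 e (hS he) f (mem_sdiff.1 hf).1
    fun hef => (mem_sdiff.1 hf).2 (hef ▸ he)

end IsMatching

theorem exists_isMatching_verts_eq {V : Finset ℤ} (d : ℕ) :
    ∀ W ⊆ V, #W = 2 * d → ∃ T, IsMatching V T ∧ #T = d ∧ verts T = W := by
  induction d with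
  | zero =>
    intro W _ hW
    refine ⟨∅, ⟨empty_subset _, by simp⟩, rfl, ?_⟩
    rw [card_eq_zero.1 hW]
    rfl
  | succ d ih =>
    intro W hWV hW
    obtain ⟨e, heW, he⟩ := exists_subset_card_eq (show 2 ≤ #W by omega)
    obtain ⟨T, hT, hTd, hTW⟩ := ih (W \ e) (sdiff_subset.trans hWV)
      (by rw [card_sdiff_of_subset heW, hW, he]; omega)
    have hmatch : IsMatching V {e} :=
      ⟨singleton_subset_iff.2 (mem_powersetCard.2 ⟨heW.trans hWV, he⟩), by simp⟩
    have hdisj : Disjoint (verts {e}) (verts T) := by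
      rw [verts_singleton, hTW]
      exact disjoint_sdiff
    refine ⟨{e} ∪ T, hmatch.union hT hdisj, ?_, ?_⟩
    · rw [card_union_of_disjoint (hmatch.disjoint_of_disjoint_verts hdisj), hTd, card_singleton,
        add_comm]
    · rw [verts_union, verts_singleton, hTW, union_sdiff_of_subset heW]

theorem matchings_one (V : Finset ℤ) :
    matchings V 1 = (V.powersetCard 2).map ⟨singleton, singleton_injective⟩ := by
  ext S
  simp only [mem_matchings_s13, card_eq_one, mem_map, Function.Embedding.coeFn_mk]
  constructor
  · rintro ⟨hS, e, rfl⟩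
    exact ⟨e, hS.1 (mem_singleton_self e), rfl⟩
  · rintro ⟨e, he, rfl⟩
    exact ⟨⟨singleton_subset_iff.2 he, by simp⟩, e, rfl⟩

theorem card_filter_matchings_one_disjoint (V W : Finset ℤ) :
    #{S ∈ matchings V 1 | Disjoint (verts S) W} = (#(V \ W)).choose 2 := by
  rw [matchings_one, filter_map, card_map, ← card_powersetCard]
  congr 1
  ext e
  simp only [mem_filter, mem_powersetCard, Function.comp_apply, Function.Embedding.coeFn_mk,
    verts_singleton, subset_sdiff]
  tauto

theorem sum_matchings_sum_powerset {β : Type*} [AddCommMonoid β] (V : Finset ℤ) (j : ℕ)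
    (G : Finset (Finset ℤ) → Finset (Finset ℤ) → β) :
    ∑ M ∈ matchings V j, ∑ S ∈ M.powerset, G S (M \ S) =
      ∑ i ∈ range (j + 1), ∑ N ∈ matchings V i,
        ∑ S ∈ matchings V (j - i) with Disjoint (verts S) (verts N), G S N := by
  rw [sum_sigma', sum_sigma', sum_sigma']
  refine sum_nbij' (fun x => ⟨⟨#(x.1 \ x.2), x.1 \ x.2⟩, x.2⟩) (fun y => ⟨y.2 ∪ y.1.2, y.2⟩)
    ?_ ?_ ?_ ?_ fun _ _ => rfl
  · rintro ⟨M, S⟩ hx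
    simp only [mem_sigma, mem_powerset, mem_matchings_s13, mem_filter, mem_range] at hx ⊢
    obtain ⟨⟨hM, hMj⟩, hSM⟩ := hx
    have hcard : #(M \ S) + #S = j := by
      rw [card_sdiff_of_subset hSM, ← hMj, Nat.sub_add_cancel (card_le_card hSM)]
    exact ⟨⟨by omega, hM.mono sdiff_subset, trivial⟩, ⟨hM.mono hSM, by omega⟩,
      hM.disjoint_verts_sdiff hSM⟩
  · rintro ⟨⟨i, N⟩, S⟩ hy
    simp only [mem_sigma, mem_powerset, mem_matchings_s13, mem_filter, mem_range] at hy ⊢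
    obtain ⟨⟨hi, hN, hNi⟩, ⟨hS, hSi⟩, hdisj⟩ := hy
    refine ⟨⟨hS.union hN hdisj, ?_⟩, subset_union_left⟩
    rw [card_union_of_disjoint (hS.disjoint_of_disjoint_verts hdisj)]
    omega
  · rintro ⟨M, S⟩ hx
    simp only [mem_sigma, mem_powerset] at hx
    simp only [union_sdiff_of_subset hx.2]
  · rintro ⟨⟨i, N⟩, S⟩ hy
    simp only [mem_sigma, mem_matchings_s13, mem_filter] at hy
    obtain ⟨⟨-, -, hNi⟩, ⟨hS, -⟩, hdisj⟩ := hy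
    simp only [union_sdiff_cancel_left (hS.disjoint_of_disjoint_verts hdisj), hNi]

end Matchings

section Phi

variable {K : Type*} [Field K]

theorem diffOp_Phi (V : Finset ℤ) (j : ℕ) (f : MvPolynomial (Finset ℤ) K) :
    diffOp K (Phi K V j) f = ∑ i ∈ range (j + 1), ∑ N ∈ matchings V i,
      avoidSum (matchings V (j - i)) verts (fun S => coeff (sqfreeExp S) f) (verts N) •
        ∏ e ∈ N, X e := by
  simp only [Phi, diffOp_sum_left, diffOp_prod_X, avoidSum, sum_smul]
  exact sum_matchings_sum_powerset V j fun S N => coeff (sqfreeExp S) f • ∏ e ∈ N, X e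

theorem coeff_sqfreeExp_diffOp_Phi {V : Finset ℤ} {i j : ℕ} {T : Finset (Finset ℤ)}
    (hT : T ∈ matchings V i) (hij : i ≤ j) (f : MvPolynomial (Finset ℤ) K) :
    coeff (sqfreeExp T) (diffOp K (Phi K V j) f) =
      avoidSum (matchings V (j - i)) verts (fun S => coeff (sqfreeExp S) f) (verts T) := by
  simp only [diffOp_Phi, coeff_sum, coeff_smul, coeff_sqfreeExp_prod_X, smul_eq_mul, mul_ite,
    mul_one, mul_zero, sum_ite_eq']
  rw [sum_eq_single_of_mem i (mem_range.2 (by omega)), if_pos hT]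
  intro i' _ hi'
  rw [if_neg fun hT' => hi' ((mem_matchings_s13.1 hT').2.symm.trans (mem_matchings_s13.1 hT).2)]

theorem coeff_sqfreeExp_sum_X {V : Finset ℤ} {r : ℕ} {S : Finset (Finset ℤ)}
    (hS : S ∈ matchings V r) :
    coeff (sqfreeExp S) (∑ e ∈ V.powersetCard 2, (X e : MvPolynomial (Finset ℤ) K)) =
      if r = 1 then 1 else 0 := by
  obtain ⟨hM, rfl⟩ := mem_matchings_s13.1 hS
  split_ifs with h
  · obtain ⟨e, rfl⟩ := card_eq_one.1 h
    simp only [sqfreeExp, sum_singleton, coeff_sum, coeff_X, Finsupp.single_left_inj one_ne_zero]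
    rw [sum_ite_eq', if_pos (hM.1 (mem_singleton_self e))]
  · refine (IsHomogeneous.sum _ _ 1 fun e _ => isHomogeneous_X K e).coeff_eq_zero ?_
    rwa [degree_sqfreeExp]

theorem diffOp_Phi_sum_X (V : Finset ℤ) (m : ℕ) :
    diffOp K (Phi K V (m + 1)) (∑ e ∈ V.powersetCard 2, X e) =
      ((#V - 2 * m).choose 2 : K) • Phi K V m := by
  rw [diffOp_Phi, sum_eq_single_of_mem m (mem_range.2 (by omega)), Phi, smul_sum]
  · refine sum_congr rfl fun N hN => ?_
    rw [avoidSum, sum_congr rfl fun S hS => coeff_sqfreeExp_sum_X (mem_filter.1 hS).1,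
      Nat.add_sub_cancel_left, if_pos rfl, sum_const, nsmul_one, card_filter_matchings_one_disjoint,
      card_sdiff_of_subset (mem_matchings_s13.1 hN).1.verts_subset, (mem_matchings_s13.1 hN).1.card_verts,
      (mem_matchings_s13.1 hN).2]
  · intro i hi him
    refine sum_eq_zero fun N _ => ?_
    rw [avoidSum, sum_eq_zero fun S hS => ?_, zero_smul]
    rw [coeff_sqfreeExp_sum_X (mem_filter.1 hS).1, if_neg]
    have := mem_range.1 hi
    omega

theorem diffOp_Phi_pow_sum_X (V : Finset ℤ) (m j : ℕ) :
    diffOp K (Phi K V (m + j)) ((∑ e ∈ V.powersetCard 2, X e) ^ j) =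
      (∏ t ∈ range j, ((#V - 2 * (m + t)).choose 2 : K)) • Phi K V m := by
  induction j with
  | zero => rw [pow_zero, ← C_1, diffOp_C, prod_range_zero, add_zero]
  | succ j ih =>
    rw [← add_assoc, pow_succ, diffOp_mul, diffOp_Phi_sum_X, diffOp_smul_left, ih, smul_smul,
      prod_range_succ, mul_comm]

theorem diffOp_Phi_eq_zero_of_pow_sum_X_mul [CharZero K] {V : Finset ℤ} {m j : ℕ} (hV : 2 * (m + j) ≤ #V)
    {f : MvPolynomial (Finset ℤ) K}
    (h : diffOp K (Phi K V (m + j)) ((∑ e ∈ V.powersetCard 2, X e) ^ j * f) = 0) :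
    diffOp K (Phi K V m) f = 0 := by
  rw [mul_comm, diffOp_mul, diffOp_Phi_pow_sum_X, diffOp_smul_left] at h
  refine (smul_eq_zero.1 h).resolve_left (prod_ne_zero_iff.2 fun t ht => ?_)
  have := mem_range.1 ht
  exact Nat.cast_ne_zero.2 (Nat.choose_pos (by omega)).ne'

theorem avoidSum_eq_zero_of_diffOp_Phi_eq_zero [CharZero K] {V : Finset ℤ} {d : ℕ}
    (hV : 4 * d ≤ #V) {f : MvPolynomial (Finset ℤ) K} (h : diffOp K (Phi K V (2 * d)) f = 0) :
    ∀ W ⊆ V, avoidSum (matchings V d) verts (fun S => coeff (sqfreeExp S) f) W = 0 := by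
  refine fun W hW => avoidSum_eq_zero_of_forall_card_eq _ (m := 2 * d) (fun S hS => ?_) le_rfl
    (by omega) (fun W' hW' hcard => ?_) hW
  · obtain ⟨hS, hSd⟩ := mem_matchings_s13.1 hS
    exact ⟨hS.verts_subset, hSd ▸ hS.card_verts⟩
  · obtain ⟨T, hT, hTd, rfl⟩ := exists_isMatching_verts_eq d W' hW' hcard
    have := coeff_sqfreeExp_diffOp_Phi (mem_matchings_s13.2 ⟨hT, hTd⟩) (show d ≤ 2 * d by omega) f
    rwa [h, coeff_zero, show 2 * d - d = d by omega, eq_comm] at this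

end Phi

theorem lefschetz_injective_general {K : Type*} [Field K] [CharZero K]
    (U : Finset ℤ) (k : ℕ) (hk : 2 * k ≤ U.card)
    (d : ℕ) (hd : 2 * d ≤ k)
    (f : MvPolynomial (Finset ℤ) K) (hf : f.IsHomogeneous d)
    (h : (∑ e ∈ U.powersetCard 2, X e) ^ (k - 2 * d) * f ∈ Ann K (Phi K U k)) :
    f ∈ Ann K (Phi K U k) := by
  obtain ⟨j, rfl⟩ := Nat.exists_eq_add_of_le hd
  rw [Nat.add_sub_cancel_left, Ann, LinearMap.mem_ker] at h
  have hF := avoidSum_eq_zero_of_diffOp_Phi_eq_zero (by omega)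
    (diffOp_Phi_eq_zero_of_pow_sum_X_mul (by omega) h)
  rw [Ann, LinearMap.mem_ker, diffOp_Phi]
  refine sum_eq_zero fun i _ => sum_eq_zero fun N hN => ?_
  by_cases hid : 2 * d + j - i = d
  · rw [hid, hF _ (mem_matchings_s13.1 hN).1.verts_subset, zero_smul]
  · rw [avoidSum, sum_eq_zero fun S hS => ?_, zero_smul]
    refine hf.coeff_eq_zero ?_
    rwa [degree_sqfreeExp, (mem_matchings_s13.1 (mem_filter.1 hS).1).2]

/-- when `2k ≤ |U|`, for every `d` with `2d ≤ k`, multiplication by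
`l^{k−2d}` with `l = Σ_e x_e` is injective from the degree-`d` component of
`A_{U,k} = P_U/Ann(Φ_{U,k})` to the degree-`(k−d)` component: if `f` is homogeneous of
degree `d` and `l^{k−2d}·f ∈ Ann(Φ_{U,k})`, then `f ∈ Ann(Φ_{U,k})`. -/
theorem lefschetz_injective {K : Type*} [Field K] [CharZero K]
    (U : Finset ℤ) (hU : U.Nonempty) (k : ℕ) (hk : 2 * k ≤ U.card)
    (d : ℕ) (hd : 2 * d ≤ k)
    (f : MvPolynomial (Finset ℤ) K) (hf : f.IsHomogeneous d)
    (h : (∑ e ∈ U.powersetCard 2, X e) ^ (k - 2 * d) * f ∈ Ann K (Phi K U k)) :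
    f ∈ Ann K (Phi K U k) :=
  lefschetz_injective_general U k hk d hd f hf h
end
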